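/- Let σ and ω be locally finite positive Borel measures on ℝ^n with ω compactly supported and A₂(σ,ω) < ∞. Then for all 0 < ε, ε' < 1/4 the mollified pair has finite full testing constant: there exists a finite constant T (depending on σ, ω, ε, ε') such that ∫_Q M(1_Q σ_ε)² dω_{ε'} ≤ T² σ_ε(Q) for all cubes Q ∈ P^n, where σ_ε = σ ∗ φ_ε and ω_{ε'} = ω ∗ φ_{ε'}. -/

import Mathlib

open MeasureTheory Set Filter
open scoped ENNReal NNReal

noncomputable section

/-- An axis-parallel half-open cube in `ℝⁿ`, given by its lower corner and (positive)
side length. -/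
structure Cube (n : ℕ) where
  corner : Fin n → ℝ
  side : ℝ
  side_pos : 0 < side

namespace Cube

variable {n : ℕ}

/-- The underlying (half-open) set of the cube. -/
def toSet (Q : Cube n) : Set (Fin n → ℝ) :=
  {x | ∀ i, Q.corner i ≤ x i ∧ x i < Q.corner i + Q.side}

/-- The concentric dilate `ΓQ` of the cube `Q` (same center, side length `Γ·ℓ(Q)`),
as a set. -/
def dilate (Q : Cube n) (Γ : ℝ) : Set (Fin n → ℝ) :=
  {x | ∀ i, Q.corner i - (Γ - 1) * Q.side / 2 ≤ x i ∧
       x i < Q.corner i + Q.side + (Γ - 1) * Q.side / 2}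

/-- Membership in `𝒫ⁿ`: the side length is an integral power of `2`. -/
def memP (Q : Cube n) : Prop := ∃ ℓ : ℤ, Q.side = (2:ℝ) ^ ℓ

end Cube

/-- The translation applied at scale `2^ℓ` in the random dyadic grid determined by `β`:
`Σ_{j : 2^{-j} < 2^ℓ} 2^{-j} β_j`. -/
def gridShift {n : ℕ} (β : ℤ → Fin n → Bool) (ℓ : ℤ) (i : Fin n) : ℝ :=
  ∑' j : ℤ, if (2:ℝ) ^ (-j) < (2:ℝ) ^ ℓ ∧ β j i = true then (2:ℝ) ^ (-j) else 0

/-- Membership in the shifted dyadic grid `𝒟^β`. -/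
def memGrid {n : ℕ} (β : ℤ → Fin n → Bool) (Q : Cube n) : Prop :=
  ∃ (ℓ : ℤ) (k : Fin n → ℤ), Q.side = (2:ℝ) ^ ℓ ∧
    ∀ i, Q.corner i = (2:ℝ) ^ ℓ * (k i : ℝ) + gridShift β ℓ i

/-- The Hardy–Littlewood maximal function of a measure, over cubes in `𝒫ⁿ`. -/
def maximal {n : ℕ} (μ : Measure (Fin n → ℝ)) (x : Fin n → ℝ) : ℝ≥0∞ :=
  ⨆ (Q : Cube n) (_ : Q.memP) (_ : x ∈ Q.toSet), μ Q.toSet / volume Q.toSet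

/-- The dyadic maximal function relative to the grid `𝒟^β`. -/
def dyadicMaximal {n : ℕ} (β : ℤ → Fin n → Bool) (μ : Measure (Fin n → ℝ))
    (x : Fin n → ℝ) : ℝ≥0∞ :=
  ⨆ (Q : Cube n) (_ : memGrid β Q) (_ : x ∈ Q.toSet), μ Q.toSet / volume Q.toSet

/-- The two-weight Muckenhoupt constant `A₂(σ,ω)`. -/
def A2 {n : ℕ} (σ ω : Measure (Fin n → ℝ)) : ℝ≥0∞ :=
  ⨆ (Q : Cube n) (_ : Q.memP), (σ Q.toSet / volume Q.toSet) * (ω Q.toSet / volume Q.toSet)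

/-- The operator norm `𝔑_M(σ,ω)` of the maximal function from `L²(σ)` to `L²(ω)`:
the least `N` with `∫ M(fσ)² dω ≤ N² ∫ f² dσ` for all (nonnegative) `f`. -/
def opNorm {n : ℕ} (σ ω : Measure (Fin n → ℝ)) : ℝ≥0∞ :=
  sInf {N : ℝ≥0∞ | ∀ f : (Fin n → ℝ) → ℝ≥0∞, Measurable f →
    ∫⁻ x, (maximal (σ.withDensity f) x) ^ 2 ∂ω ≤ N ^ 2 * ∫⁻ x, (f x) ^ 2 ∂σ}

/-- `φ` is an admissible mollifier on `ℝⁿ`: smooth, `0 ≤ φ ≤ 1`, supported in `(−1,1)ⁿ`,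
at least `2^{−n}` on `(−5/8,5/8)ⁿ`, with `∫ φ = 1`. -/
def IsAdmissibleMollifier {n : ℕ} (φ : (Fin n → ℝ) → ℝ) : Prop :=
  ContDiff ℝ (⊤ : ℕ∞) φ ∧
  (∀ x, φ x ∈ Set.Icc (0:ℝ) 1) ∧
  (∀ x, φ x ≠ 0 → ∀ i, |x i| < 1) ∧
  (∀ x : Fin n → ℝ, (∀ i, |x i| < 5/8) → (2:ℝ) ^ (-(n:ℤ)) ≤ φ x) ∧
  (∫ x, φ x) = 1

/-- The mollification `ν_δ = ν ∗ φ_δ` of a measure `ν`, where `φ_δ(x) = δ^{−n} φ(x/δ)`: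
the measure with density `x ↦ ∫ φ_δ(x−y) dν(y)` with respect to Lebesgue measure. -/
def mollify {n : ℕ} (φ : (Fin n → ℝ) → ℝ) (δ : ℝ) (ν : Measure (Fin n → ℝ)) :
    Measure (Fin n → ℝ) :=
  volume.withDensity fun x => ∫⁻ y, ENNReal.ofReal ((δ ^ n)⁻¹ * φ (δ⁻¹ • (x - y))) ∂ν

/-- The full testing constant `𝔗_M(σ,ω)`: the least `T` with
`∫_Q M(1_Q σ)² dω ≤ T² σ(Q)` for all `Q ∈ 𝒫ⁿ`. -/
def fullTesting {n : ℕ} (σ ω : Measure (Fin n → ℝ)) : ℝ≥0∞ :=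
  sInf {T : ℝ≥0∞ | ∀ Q : Cube n, Q.memP →
    ∫⁻ x in Q.toSet, (maximal (σ.restrict Q.toSet) x) ^ 2 ∂ω ≤ T ^ 2 * σ Q.toSet}

/-! `ω_{ε'}` is a finite measure with bounded density, carried by a ball `B(0,R)`. For `x` in
that ball, split the supremum defining `M(1_Q σ_ε)(x)` at cube side `2R`. Cubes of side at most
`2R` stay inside `B(0,3R)`, where `σ_ε` has bounded density, and the maximal function of a
bounded integrable density is square integrable (weak type `(1,1)` plus a layer-cake sum).
A larger cube `Q'` has a dyadic quadruple containing both the `ε`-neighbourhood of `Q'` and a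
fixed cube `Q₀` with `ω(Q₀) > 0`, so `A₂` gives `σ_ε(Q') ≲ A₂ |Q'|² / ω(Q₀)`, and the squared
average of `1_Q σ_ε` over `Q'` is at most `σ_ε(Q) · σ_ε(Q') / |Q'|² ≲ σ_ε(Q) A₂ / ω(Q₀)`. -/

section

open Metric

variable {n : ℕ}

lemma mem_closedBall_pi_iff {x c : Fin n → ℝ} {r : ℝ} (hr : 0 ≤ r) :
    x ∈ closedBall c r ↔ ∀ i, |x i - c i| ≤ r := by
  simp [mem_closedBall, dist_pi_le_iff hr, Real.dist_eq]

namespace Cube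

lemma toSet_eq_pi (Q : Cube n) :
    Q.toSet = Set.pi univ fun i => Ico (Q.corner i) (Q.corner i + Q.side) := by
  ext x; simp [toSet, Set.mem_pi]

lemma measurableSet_toSet (Q : Cube n) : MeasurableSet Q.toSet := by
  rw [toSet_eq_pi]
  exact MeasurableSet.univ_pi fun _ => measurableSet_Ico

lemma volume_toSet (Q : Cube n) : volume Q.toSet = ENNReal.ofReal (Q.side ^ n) := by
  rw [toSet_eq_pi, Real.volume_pi_Ico]
  simp [ENNReal.ofReal_pow Q.side_pos.le]

lemma volume_toSet_ne_zero (Q : Cube n) : volume Q.toSet ≠ 0 := by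
  simpa [volume_toSet] using pow_pos Q.side_pos n

lemma volume_toSet_ne_top (Q : Cube n) : volume Q.toSet ≠ ⊤ := by
  simp [volume_toSet]

def center (Q : Cube n) : Fin n → ℝ := fun i => Q.corner i + Q.side / 2

lemma toSet_subset_closedBall_center (Q : Cube n) :
    Q.toSet ⊆ closedBall Q.center (Q.side / 2) := by
  intro x hx
  rw [mem_closedBall_pi_iff (by linarith [Q.side_pos])]
  intro i
  have := hx i
  rw [center, abs_le]
  constructor <;> linarith

lemma volume_closedBall_center (Q : Cube n) (c : ℝ) (hc : 0 ≤ c) :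
    volume (closedBall Q.center (c * (Q.side / 2))) = ENNReal.ofReal c ^ n * volume Q.toSet := by
  rw [Real.volume_pi_closedBall _ (by nlinarith [Q.side_pos]), volume_toSet, Fintype.card_fin,
    ← ENNReal.ofReal_pow hc, ← ENNReal.ofReal_mul (by positivity), ← mul_pow]
  ring_nf

lemma toSet_subset_closedBall {Q : Cube n} {x : Fin n → ℝ} (hx : x ∈ Q.toSet) :
    Q.toSet ⊆ closedBall x Q.side := by
  intro z hz
  rw [mem_closedBall_pi_iff Q.side_pos.le]
  intro i
  have := hx i
  have := hz i
  rw [abs_le]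
  constructor <;> linarith

/-- Unlike the centred dilate `3Q`, this enlargement stays in `𝒫ⁿ`. -/
def quadruple (Q : Cube n) : Cube n :=
  ⟨fun i => Q.corner i - Q.side, 4 * Q.side, by linarith [Q.side_pos]⟩

lemma memP.quadruple {Q : Cube n} (hQ : Q.memP) : Q.quadruple.memP := by
  obtain ⟨ℓ, hℓ⟩ := hQ
  refine ⟨ℓ + 2, ?_⟩
  change 4 * Q.side = _
  rw [hℓ, zpow_add₀ two_ne_zero]
  norm_num
  ring

lemma volume_quadruple (Q : Cube n) :
    volume Q.quadruple.toSet = 4 ^ n * volume Q.toSet := by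
  rw [volume_toSet, volume_toSet, quadruple, mul_pow, ENNReal.ofReal_mul (by positivity),
    ENNReal.ofReal_pow (by norm_num)]
  norm_num

lemma closedBall_subset_quadruple {Q : Cube n} {x : Fin n → ℝ} (hx : x ∈ Q.toSet) :
    closedBall x Q.side ⊆ Q.quadruple.toSet := by
  intro y hy
  rw [mem_closedBall_pi_iff Q.side_pos.le] at hy
  intro i
  have := hx i
  have := abs_le.mp (hy i)
  simp only [quadruple]
  constructor <;> linarith

lemma closedBall_subset_quadruple_of_mem {Q : Cube n} {x c : Fin n → ℝ} {R : ℝ}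
    (hxQ : x ∈ Q.toSet) (hx : x ∈ closedBall c R) (hR : 2 * R ≤ Q.side) :
    closedBall c R ⊆ Q.quadruple.toSet :=
  (closedBall_subset_closedBall' (by rw [dist_comm]; linarith [mem_closedBall.mp hx])).trans
    (closedBall_subset_quadruple hxQ)

lemma thickening_subset_quadruple (Q : Cube n) {δ : ℝ} (hδ : δ ≤ Q.side) :
    thickening δ Q.toSet ⊆ Q.quadruple.toSet := by
  intro y hy
  obtain ⟨z, hz, hyz⟩ := mem_thickening_iff.mp hy
  exact closedBall_subset_quadruple hz (mem_closedBall.mpr (hyz.le.trans hδ))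

end Cube

lemma exists_memP_measure_pos {ν : Measure (Fin n → ℝ)} (hν : ν ≠ 0) :
    ∃ Q : Cube n, Q.memP ∧ 0 < ν Q.toSet := by
  by_contra! h
  let unitCube (k : Fin n → ℤ) : Cube n := ⟨fun i => k i, 1, one_pos⟩
  have hcover : ⋃ k, (unitCube k).toSet = univ := eq_univ_of_forall fun x =>
    mem_iUnion.mpr ⟨fun i => ⌊x i⌋, fun i => ⟨Int.floor_le _, Int.lt_floor_add_one _⟩⟩
  refine hν (Measure.measure_univ_eq_zero.mp ?_)
  rw [← hcover]
  exact measure_iUnion_null fun k => nonpos_iff_eq_zero.mp (h _ ⟨0, by simp [unitCube]⟩)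

lemma measure_mul_measure_le_A2 (σ ω : Measure (Fin n → ℝ)) {Q : Cube n} (hQ : Q.memP) :
    σ Q.toSet * ω Q.toSet ≤ A2 σ ω * volume Q.toSet ^ 2 := by
  have hV0 := Q.volume_toSet_ne_zero
  have hV := Q.volume_toSet_ne_top
  calc σ Q.toSet * ω Q.toSet
      = (σ Q.toSet / volume Q.toSet) * (ω Q.toSet / volume Q.toSet) * volume Q.toSet ^ 2 := by
        rw [sq, mul_mul_mul_comm, ENNReal.div_mul_cancel hV0 hV, ENNReal.div_mul_cancel hV0 hV]
    _ ≤ A2 σ ω * volume Q.toSet ^ 2 := by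
        gcongr
        exact le_iSup₂ (f := fun (Q : Cube n) (_ : Q.memP) =>
          (σ Q.toSet / volume Q.toSet) * (ω Q.toSet / volume Q.toSet)) Q hQ

lemma ENNReal.exists_dyadic_level {a B : ℝ≥0∞} (ha : a ≠ 0) (haB : a ≤ B) (hB : B ≠ ⊤) :
    ∃ j : ℕ, B / 2 ^ (j + 1) < a ∧ a ≤ B / 2 ^ j := by
  lift B to ℝ≥0 using hB
  lift a to ℝ≥0 using ne_top_of_le_ne_top ENNReal.coe_ne_top haB
  have ha : 0 < a := pos_iff_ne_zero.mpr (by exact_mod_cast ha)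
  obtain ⟨j, hj, hj'⟩ := exists_nat_pow_near (x := B / a) (y := (2 : ℝ≥0))
    ((one_le_div ha).mpr (by exact_mod_cast haB)) (by norm_num)
  refine ⟨j, ?_, ?_⟩
  · rw [ENNReal.div_lt_iff (by simp) (by simp), mul_comm]
    exact_mod_cast (div_lt_iff₀ ha).mp hj'
  · rw [ENNReal.le_div_iff_mul_le (by simp) (by simp), mul_comm]
    exact_mod_cast (le_div_iff₀ ha).mp hj

/-- Layer cake along the levels `B / 2 ^ j`. -/
lemma lintegral_sq_le_of_weakType {X : Type*} [MeasurableSpace X] (μ : Measure X)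
    {f : X → ℝ≥0∞} {B c : ℝ≥0∞} (hfB : ∀ x, f x ≤ B) (hB : B ≠ ⊤)
    (hf : ∀ t, t * μ {x | t < f x} ≤ c) :
    ∫⁻ x, f x ^ 2 ∂μ ≤ 4 * B * c := by
  set T : ℕ → Set X := fun j => toMeasurable μ {x | B / 2 ^ (j + 1) < f x}
  have hT : ∀ j, MeasurableSet (T j) := fun j => measurableSet_toMeasurable _ _
  have hpt : ∀ x, f x ^ 2 ≤ ∑' j, (B / 2 ^ j) ^ 2 * (T j).indicator 1 x := by
    intro x
    rcases eq_or_ne (f x) 0 with h0 | h0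
    · simp [h0]
    obtain ⟨j, hj, hj'⟩ := ENNReal.exists_dyadic_level h0 (hfB x) hB
    refine le_trans ?_ (ENNReal.le_tsum j)
    rw [indicator_of_mem (show x ∈ T j from subset_toMeasurable _ _ hj), Pi.one_apply, mul_one]
    gcongr
  have hhalf : ∀ j : ℕ, B / 2 ^ j = 2 * (B / 2 ^ (j + 1)) := fun j => by
    rw [div_eq_mul_inv, div_eq_mul_inv, ENNReal.inv_pow, ENNReal.inv_pow, pow_succ]
    calc B * 2⁻¹ ^ j = B * 2⁻¹ ^ j * (2 * 2⁻¹) := by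
          rw [ENNReal.mul_inv_cancel two_ne_zero ENNReal.ofNat_ne_top, mul_one]
      _ = 2 * (B * (2⁻¹ ^ j * 2⁻¹)) := by ring
  calc ∫⁻ x, f x ^ 2 ∂μ ≤ ∫⁻ x, ∑' j, (B / 2 ^ j) ^ 2 * (T j).indicator 1 x ∂μ :=
        lintegral_mono hpt
    _ = ∑' j, (B / 2 ^ j) * (B / 2 ^ j) * μ (T j) := by
        rw [lintegral_tsum fun j => ((measurable_one.indicator (hT j)).const_mul _).aemeasurable]
        refine tsum_congr fun j => ?_
        rw [lintegral_const_mul _ (measurable_one.indicator (hT j)),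
          lintegral_indicator_one (hT j), sq]
    _ ≤ ∑' j : ℕ, 2 * (B / 2 ^ j) * c := by
        refine ENNReal.tsum_le_tsum fun j => ?_
        calc B / 2 ^ j * (B / 2 ^ j) * μ (T j)
            = 2 * (B / 2 ^ j) * (B / 2 ^ (j + 1) * μ {x | B / 2 ^ (j + 1) < f x}) := by
              rw [measure_toMeasurable]
              nth_rewrite 2 [hhalf j]
              ring
          _ ≤ 2 * (B / 2 ^ j) * c := by gcongr; exact hf _
    _ = 4 * B * c := by
        simp_rw [div_eq_mul_inv, ENNReal.inv_pow]
        rw [ENNReal.tsum_mul_right]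
        simp_rw [← mul_assoc]
        rw [ENNReal.tsum_mul_left, ENNReal.tsum_geometric, ENNReal.one_sub_inv_two, inv_inv]
        ring

def truncatedMaximal (ν : Measure (Fin n → ℝ)) (r : ℝ) (x : Fin n → ℝ) : ℝ≥0∞ :=
  ⨆ (Q : Cube n) (_ : Q.memP ∧ Q.side ≤ r ∧ x ∈ Q.toSet), ν Q.toSet / volume Q.toSet

lemma truncatedMaximal_le {ν : Measure (Fin n → ℝ)} {B : ℝ≥0∞} (hν : ν ≤ B • volume)
    (r : ℝ) (x : Fin n → ℝ) : truncatedMaximal ν r x ≤ B :=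
  iSup₂_le fun Q _ => ENNReal.div_le_of_le_mul (hν Q.toSet)

lemma truncatedMaximal_le_restrict {ν : Measure (Fin n → ℝ)} {r : ℝ} {x : Fin n → ℝ}
    {S : Set (Fin n → ℝ)} (hS : closedBall x r ⊆ S) :
    truncatedMaximal ν r x ≤ truncatedMaximal (ν.restrict S) r x := by
  refine iSup₂_le fun Q hQ => le_iSup₂_of_le
    (f := fun (Q : Cube n) (_ : Q.memP ∧ Q.side ≤ r ∧ x ∈ Q.toSet) =>
      ν.restrict S Q.toSet / volume Q.toSet) Q hQ ?_
  have hQS : Q.toSet ⊆ S :=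
    (Cube.toSet_subset_closedBall hQ.2.2).trans ((closedBall_subset_closedBall hQ.2.1).trans hS)
  rw [Measure.restrict_apply Q.measurableSet_toSet, inter_eq_left.mpr hQS]

/-- Weak type `(1,1)`, by the Vitali covering lemma with enlargement factor `5`. -/
lemma mul_volume_lt_truncatedMaximal_le (ν : Measure (Fin n → ℝ)) (r : ℝ) (t : ℝ≥0∞) :
    t * volume {x | t < truncatedMaximal ν r x} ≤ 5 ^ n * ν univ := by
  set S := {x | t < truncatedMaximal ν r x}
  have hex : ∀ p ∈ S, ∃ Q : Cube n, (Q.memP ∧ Q.side ≤ r ∧ p ∈ Q.toSet) ∧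
      t * volume Q.toSet < ν Q.toSet := by
    intro p hp
    obtain ⟨Q, hQ⟩ := lt_iSup_iff.mp (show t < truncatedMaximal ν r p from hp)
    obtain ⟨hQ, hlt⟩ := lt_iSup_iff.mp hQ
    exact ⟨Q, hQ, ENNReal.mul_lt_of_lt_div hlt⟩
  have : Nonempty (Cube n) := ⟨⟨0, 1, one_pos⟩⟩
  choose! Q hQ htQ using hex
  obtain ⟨u, huS, hdisj, hcov⟩ :=
    Vitali.exists_disjoint_subfamily_covering_enlargement_closedBall S (fun p => (Q p).center)
      (fun p => (Q p).side / 2) (r / 2) (fun p hp => by linarith [(hQ p hp).2.1]) 5 (by norm_num)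
  have hu : u.Countable := hdisj.countable_of_nonempty_interior fun p _ =>
    ⟨_, ball_subset_interior_closedBall (mem_ball_self (by linarith [(Q p).side_pos]))⟩
  have hScov : S ⊆ ⋃ p ∈ u, closedBall (Q p).center (5 * ((Q p).side / 2)) := fun a ha => by
    obtain ⟨b, hb, hsub⟩ := hcov a ha
    exact mem_biUnion hb (hsub ((Q a).toSet_subset_closedBall_center (hQ a ha).2.2))
  calc t * volume S
      ≤ t * ∑' p : u, volume (closedBall (Q p).center (5 * ((Q p).side / 2))) := by
        gcongr
        exact (measure_mono hScov).trans (measure_biUnion_le volume hu _)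
    _ = ∑' p : u, 5 ^ n * (t * volume (Q p).toSet) := by
        rw [← ENNReal.tsum_mul_left]
        congr! 2 with p
        rw [Cube.volume_closedBall_center _ _ (by norm_num)]
        norm_num
        ring
    _ ≤ ∑' p : u, 5 ^ n * ν (closedBall (Q p).center ((Q p).side / 2)) := by
        gcongr with p
        exact (htQ p (huS p.2)).le.trans (measure_mono (Cube.toSet_subset_closedBall_center _))
    _ = 5 ^ n * ν (⋃ p ∈ u, closedBall (Q p).center ((Q p).side / 2)) := by
        rw [ENNReal.tsum_mul_left,
          measure_biUnion hu hdisj fun _ _ => isClosed_closedBall.measurableSet]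
    _ ≤ 5 ^ n * ν univ := by gcongr; exact subset_univ _

lemma lintegral_truncatedMaximal_sq_le {ν : Measure (Fin n → ℝ)} {B : ℝ≥0∞}
    (hν : ν ≤ B • volume) (hB : B ≠ ⊤) (r : ℝ) :
    ∫⁻ x, truncatedMaximal ν r x ^ 2 ≤ 4 * B * (5 ^ n * ν univ) :=
  lintegral_sq_le_of_weakType volume (truncatedMaximal_le hν r) hB
    (mul_volume_lt_truncatedMaximal_le ν r)

lemma maximal_sq_le {μ : Measure (Fin n → ℝ)} {x : Fin n → ℝ} {r : ℝ} {c : ℝ≥0∞}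
    (hbig : ∀ Q : Cube n, Q.memP → r < Q.side → x ∈ Q.toSet →
      (μ Q.toSet / volume Q.toSet) ^ 2 ≤ c) :
    maximal μ x ^ 2 ≤ truncatedMaximal μ r x ^ 2 + c := by
  simp only [maximal, ENNReal.iSup_pow_of_ne_zero two_ne_zero]
  refine iSup_le fun Q => iSup_le fun hQ => iSup_le fun hx => ?_
  rcases le_or_gt Q.side r with hsmall | hlarge
  · refine le_add_right (pow_le_pow_left' ?_ 2)
    exact le_iSup₂_of_le (f := fun (Q : Cube n) (_ : Q.memP ∧ Q.side ≤ r ∧ x ∈ Q.toSet) =>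
      μ Q.toSet / volume Q.toSet) Q ⟨hQ, hsmall, hx⟩ le_rfl
  · exact le_add_left (hbig Q hQ hlarge hx)

lemma sq_average_restrict_le {μ : Measure (Fin n → ℝ)} (S : Set (Fin n → ℝ)) {Q : Cube n}
    {a : ℝ≥0∞} (hQ : μ Q.toSet ≤ a * volume Q.toSet ^ 2) :
    (μ.restrict S Q.toSet / volume Q.toSet) ^ 2 ≤ μ S * a := by
  set V := volume Q.toSet
  rw [Measure.restrict_apply Q.measurableSet_toSet, sq]
  calc μ (Q.toSet ∩ S) / V * (μ (Q.toSet ∩ S) / V) ≤ μ S / V * (a * V ^ 2 / V) := by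
        gcongr
        · exact inter_subset_right
        · exact (measure_mono inter_subset_left).trans hQ
    _ = μ S * a * (V * V⁻¹) * (V * V⁻¹) := by simp only [div_eq_mul_inv]; ring
    _ = μ S * a := by
        rw [ENNReal.mul_inv_cancel Q.volume_toSet_ne_zero Q.volume_toSet_ne_top]; ring

lemma fullTesting_lt_top_of_forall_le {σ ω : Measure (Fin n → ℝ)} {C : ℝ≥0∞} (hC : C ≠ ⊤)
    (h : ∀ Q : Cube n, Q.memP →
      ∫⁻ x in Q.toSet, maximal (σ.restrict Q.toSet) x ^ 2 ∂ω ≤ C * σ Q.toSet) :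
    fullTesting σ ω < ⊤ := by
  have hC1 : C ≤ (C + 1) ^ 2 := le_self_add.trans (le_self_pow₀ le_add_self two_ne_zero)
  refine lt_of_le_of_lt (b := C + 1) (sInf_le ?_) ?_
  · exact fun Q hQ => (h Q hQ).trans (mul_le_mul_left hC1 _)
  · exact ENNReal.add_lt_top.mpr ⟨hC.lt_top, ENNReal.one_lt_top⟩

theorem lintegral_maximal_restrict_sq_le {μ ρ : Measure (Fin n → ℝ)} {R : ℝ} {a B D : ℝ≥0∞}
    (hρ : ρ (closedBall 0 R)ᶜ = 0) (hρD : ρ ≤ D • volume)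
    (hμB : μ.restrict (closedBall 0 (3 * R)) ≤ B • volume) (hB : B ≠ ⊤)
    (hbig : ∀ Q : Cube n, Q.memP → 2 * R < Q.side → (Q.toSet ∩ closedBall 0 R).Nonempty →
      μ Q.toSet ≤ a * volume Q.toSet ^ 2)
    (s : Set (Fin n → ℝ)) :
    ∫⁻ x in s, maximal (μ.restrict s) x ^ 2 ∂ρ ≤ (4 * B * 5 ^ n * D + a * ρ univ) * μ s := by
  set ν := (μ.restrict s).restrict (closedBall 0 (3 * R))
  set Ms := truncatedMaximal ν (2 * R)
  have hν : ν ≤ B • volume := (Measure.restrict_mono subset_rfl Measure.restrict_le_self).trans hμB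
  have hpt : ∀ x ∈ closedBall 0 R, maximal (μ.restrict s) x ^ 2 ≤ Ms x ^ 2 + μ s * a := by
    intro x hx
    refine (maximal_sq_le fun Q hQ hside hxQ =>
      sq_average_restrict_le s (hbig Q hQ hside ⟨x, hxQ, hx⟩)).trans ?_
    gcongr
    refine truncatedMaximal_le_restrict (closedBall_subset_closedBall' ?_)
    linarith [mem_closedBall.mp hx]
  have hρR : ρ.restrict (closedBall 0 R) = ρ :=
    Measure.restrict_eq_self_of_ae_mem (mem_ae_iff.mpr hρ)
  calc ∫⁻ x in s, maximal (μ.restrict s) x ^ 2 ∂ρ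
      ≤ ∫⁻ x in closedBall 0 R, maximal (μ.restrict s) x ^ 2 ∂ρ := by
        rw [hρR]
        exact lintegral_mono' Measure.restrict_le_self le_rfl
    _ ≤ ∫⁻ x in closedBall 0 R, Ms x ^ 2 + μ s * a ∂ρ :=
        setLIntegral_mono' measurableSet_closedBall hpt
    _ ≤ ∫⁻ x, Ms x ^ 2 ∂(D • volume) + μ s * a * ρ univ := by
        rw [lintegral_add_right _ measurable_const, setLIntegral_const]
        gcongr
        · exact Measure.restrict_le_self.trans hρD
        · exact subset_univ _
    _ ≤ D * (4 * B * (5 ^ n * ν univ)) + μ s * a * ρ univ := by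
        rw [lintegral_smul_measure, smul_eq_mul]
        gcongr
        exact lintegral_truncatedMaximal_sq_le hν hB _
    _ ≤ (4 * B * 5 ^ n * D + a * ρ univ) * μ s := by
        have : ν univ ≤ μ s := by
          rw [Measure.restrict_apply_univ, ← Measure.restrict_apply_univ s]
          exact measure_mono (subset_univ _)
        calc _ ≤ D * (4 * B * (5 ^ n * μ s)) + μ s * a * ρ univ := by gcongr
          _ = _ := by ring

def mollifierKernel (φ : (Fin n → ℝ) → ℝ) (δ : ℝ) (x y : Fin n → ℝ) : ℝ≥0∞ :=
  ENNReal.ofReal ((δ ^ n)⁻¹ * φ (δ⁻¹ • (x - y)))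

lemma mollify_eq_withDensity (φ : (Fin n → ℝ) → ℝ) (δ : ℝ) (ν : Measure (Fin n → ℝ)) :
    mollify φ δ ν = volume.withDensity fun x => ∫⁻ y, mollifierKernel φ δ x y ∂ν :=
  rfl

namespace IsAdmissibleMollifier

variable {φ : (Fin n → ℝ) → ℝ} {δ : ℝ}

lemma measurable_mollifierKernel (hφ : IsAdmissibleMollifier φ) (δ : ℝ) :
    Measurable (Function.uncurry (mollifierKernel φ δ)) := by
  have := hφ.1.continuous
  unfold mollifierKernel Function.uncurry
  fun_prop

lemma mollifierKernel_le_indicator (hφ : IsAdmissibleMollifier φ) (hδ : 0 < δ)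
    (x y : Fin n → ℝ) :
    mollifierKernel φ δ x y ≤ (ball x δ).indicator (fun _ => ENNReal.ofReal (δ ^ n)⁻¹) y := by
  by_cases hy : y ∈ ball x δ
  · rw [indicator_of_mem hy]
    exact ENNReal.ofReal_le_ofReal
      (mul_le_of_le_one_right (by positivity) (hφ.2.1 _).2)
  · rw [indicator_of_notMem hy, nonpos_iff_eq_zero, mollifierKernel, ENNReal.ofReal_eq_zero]
    by_contra! hne
    refine hy (mem_ball'.mpr ((dist_pi_lt_iff hδ).mpr fun i => ?_))
    have := hφ.2.2.1 _ (right_ne_zero_of_mul hne.ne') i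
    rwa [Pi.smul_apply, smul_eq_mul, abs_mul, abs_inv, abs_of_pos hδ, inv_mul_lt_iff₀ hδ,
      mul_one, Pi.sub_apply, ← Real.dist_eq] at this

lemma lintegral_mollifierKernel_le (hφ : IsAdmissibleMollifier φ) (hδ : 0 < δ)
    (ν : Measure (Fin n → ℝ)) (x : Fin n → ℝ) :
    ∫⁻ y, mollifierKernel φ δ x y ∂ν ≤ ENNReal.ofReal (δ ^ n)⁻¹ * ν (ball x δ) :=
  (lintegral_mono (hφ.mollifierKernel_le_indicator hδ x)).trans_eq
    (lintegral_indicator_const measurableSet_ball _)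

lemma mollify_le_smul_volume (hφ : IsAdmissibleMollifier φ) (hδ : 0 < δ)
    (ν : Measure (Fin n → ℝ)) :
    mollify φ δ ν ≤ (ENNReal.ofReal (δ ^ n)⁻¹ * ν univ) • volume := by
  rw [mollify_eq_withDensity, ← withDensity_const]
  refine withDensity_mono (ae_of_all _ fun x => ?_)
  exact (hφ.lintegral_mollifierKernel_le hδ ν x).trans
    (mul_le_mul_right (measure_mono (subset_univ _)) _)

lemma restrict_mollify_le_smul_volume (hφ : IsAdmissibleMollifier φ) (hδ : 0 < δ)
    (ν : Measure (Fin n → ℝ)) (c : Fin n → ℝ) (r : ℝ) :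
    (mollify φ δ ν).restrict (closedBall c r) ≤
      (ENNReal.ofReal (δ ^ n)⁻¹ * ν (ball c (r + δ))) • volume := by
  rw [mollify_eq_withDensity, restrict_withDensity measurableSet_closedBall]
  calc _ ≤ (volume.restrict (closedBall c r)).withDensity
        fun _ => ENNReal.ofReal (δ ^ n)⁻¹ * ν (ball c (r + δ)) := by
        refine withDensity_mono ((ae_restrict_iff' measurableSet_closedBall).mpr
          (ae_of_all _ fun x hx => (hφ.lintegral_mollifierKernel_le hδ ν x).trans ?_))
        exact mul_le_mul_right
          (measure_mono (ball_subset_ball' (by linarith [mem_closedBall.mp hx]))) _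
    _ ≤ _ := by
        rw [withDensity_const]
        refine Measure.le_iff'.mpr fun s => ?_
        simp only [Measure.smul_apply, smul_eq_mul]
        exact mul_le_mul_right (Measure.le_iff'.mp Measure.restrict_le_self s) _

lemma mollify_apply_le (hφ : IsAdmissibleMollifier φ) (hδ : 0 < δ)
    (ν : Measure (Fin n → ℝ)) [SFinite ν] {A : Set (Fin n → ℝ)} (hA : MeasurableSet A) :
    mollify φ δ ν A ≤ 2 ^ n * ν (thickening δ A) := by
  rw [mollify_eq_withDensity, withDensity_apply _ hA,
    lintegral_lintegral_swap (hφ.measurable_mollifierKernel δ).aemeasurable]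
  refine (lintegral_mono fun y => ?_).trans_eq
    (lintegral_indicator_const isOpen_thickening.measurableSet _)
  calc ∫⁻ x in A, mollifierKernel φ δ x y
      ≤ ∫⁻ x in A, (ball y δ).indicator (fun _ => ENNReal.ofReal (δ ^ n)⁻¹) x := by
        refine lintegral_mono fun x => (hφ.mollifierKernel_le_indicator hδ x y).trans_eq ?_
        simp only [Set.indicator, mem_ball, dist_comm]
    _ = ENNReal.ofReal (δ ^ n)⁻¹ * volume (ball y δ ∩ A) := by
        rw [lintegral_indicator_const measurableSet_ball, Measure.restrict_apply measurableSet_ball]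
    _ ≤ (thickening δ A).indicator (fun _ => 2 ^ n) y := by
        by_cases hy : y ∈ thickening δ A
        · rw [indicator_of_mem hy]
          calc _ ≤ ENNReal.ofReal (δ ^ n)⁻¹ * volume (ball y δ) := by
                gcongr; exact inter_subset_left
            _ = 2 ^ n := by
                rw [Real.volume_pi_ball _ hδ, Fintype.card_fin,
                  ← ENNReal.ofReal_mul (by positivity), mul_pow, show (δ ^ n)⁻¹ * (2 ^ n * δ ^ n) = (2 : ℝ) ^ n by field_simp,
                  ENNReal.ofReal_pow zero_le_two]
                norm_num
        · have : ball y δ ∩ A = ∅ := by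
            refine eq_empty_of_forall_notMem fun x hx => hy (mem_thickening_iff.mpr ⟨x, hx.2, ?_⟩)
            exact mem_ball'.mp hx.1
          simp [this]

lemma mollify_compl_thickening_eq_zero (hφ : IsAdmissibleMollifier φ) (hδ : 0 < δ)
    {ν : Measure (Fin n → ℝ)} [SFinite ν] {K : Set (Fin n → ℝ)} (hK : ν Kᶜ = 0) :
    mollify φ δ ν (thickening δ K)ᶜ = 0 := by
  refine nonpos_iff_eq_zero.mp
    ((hφ.mollify_apply_le hδ ν isOpen_thickening.measurableSet.compl).trans ?_)
  rw [measure_mono_null (thickening_compl_thickening_self_subset_compl δ K) hK, mul_zero]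

/-- `σ_δ(Q) ≤ 2ⁿ σ(4Q)` and `σ(4Q) ω(Q₀) ≤ σ(4Q) ω(4Q) ≤ A₂ |4Q|²`. -/
lemma mollify_le_A2_mul (hφ : IsAdmissibleMollifier φ) (hδ : 0 < δ)
    (σ ω : Measure (Fin n → ℝ)) [SFinite σ] {Q Q₀ : Cube n} (hQ : Q.memP) (hδQ : δ ≤ Q.side)
    (hQ₀ : Q₀.toSet ⊆ Q.quadruple.toSet) (hωQ₀ : ω Q₀.toSet ≠ 0) (hωQ₀' : ω Q₀.toSet ≠ ⊤) :
    mollify φ δ σ Q.toSet ≤ 32 ^ n * A2 σ ω / ω Q₀.toSet * volume Q.toSet ^ 2 := by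
  rw [← ENNReal.mul_div_right_comm, ENNReal.le_div_iff_mul_le (Or.inl hωQ₀) (Or.inl hωQ₀')]
  calc mollify φ δ σ Q.toSet * ω Q₀.toSet
      ≤ 2 ^ n * σ Q.quadruple.toSet * ω Q.quadruple.toSet := by
        gcongr
        exact (hφ.mollify_apply_le hδ σ Q.measurableSet_toSet).trans
          (mul_le_mul_right (measure_mono (Q.thickening_subset_quadruple hδQ)) _)
    _ ≤ 2 ^ n * (A2 σ ω * volume Q.quadruple.toSet ^ 2) := by
        rw [mul_assoc]
        exact mul_le_mul_right (measure_mul_measure_le_A2 σ ω hQ.quadruple) _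
    _ = 32 ^ n * A2 σ ω * volume Q.toSet ^ 2 := by
        rw [Q.volume_quadruple, show (32 : ℝ≥0∞) = 2 * 4 ^ 2 by norm_num, mul_pow, mul_pow,
          ← pow_mul, ← pow_mul, mul_comm 2 n]
        ring

end IsAdmissibleMollifier

end

theorem mollified_fullTesting_finite_general
    {n : ℕ} (φ : (Fin n → ℝ) → ℝ) (hφ : IsAdmissibleMollifier φ)
    (σ ω : Measure (Fin n → ℝ))
    (hσ : IsLocallyFiniteMeasure σ) (hω : IsLocallyFiniteMeasure ω)
    (hωc : ∃ K : Set (Fin n → ℝ), IsCompact K ∧ ω Kᶜ = 0)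
    (hA2 : A2 σ ω ≠ ⊤)
    (ε ε' : ℝ) (hε : 0 < ε) (hε' : 0 < ε') :
    fullTesting (mollify φ ε σ) (mollify φ ε' ω) < ⊤ := by
  obtain ⟨K, hK, hKc⟩ := hωc
  rcases eq_or_ne ω 0 with rfl | hω0
  · exact fullTesting_lt_top_of_forall_le ENNReal.zero_ne_top fun Q _ => by simp [mollify]
  obtain ⟨Q₀, hQ₀, hωQ₀⟩ := exists_memP_measure_pos hω0
  have hω_univ : ω univ ≠ ⊤ := ne_top_of_le_ne_top hK.measure_lt_top.ne
    (by simpa [hKc] using measure_union_le (μ := ω) K Kᶜ)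
  obtain ⟨R, hεR, hR⟩ := ((hK.isBounded.thickening (δ := ε')).union
    (Metric.isBounded_closedBall.subset Q₀.toSet_subset_closedBall_center)).subset_closedBall_lt
      ε (0 : Fin n → ℝ)
  obtain ⟨hKR, hQ₀R⟩ := union_subset_iff.mp hR
  have hB : ENNReal.ofReal (ε ^ n)⁻¹ * σ (Metric.ball 0 (3 * R + ε)) ≠ ⊤ :=
    ENNReal.mul_ne_top ENNReal.ofReal_ne_top measure_ball_lt_top.ne
  have hρ : mollify φ ε' ω univ ≠ ⊤ := ne_top_of_le_ne_top (by finiteness)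
    ((hφ.mollify_apply_le hε' ω MeasurableSet.univ).trans
      (mul_le_mul_right (measure_mono (subset_univ _)) _))
  have hωQ₀' : ω Q₀.toSet ≠ ⊤ := ne_top_of_le_ne_top hω_univ (measure_mono (subset_univ _))
  refine fullTesting_lt_top_of_forall_le ?_ fun Q _ => lintegral_maximal_restrict_sq_le
    (measure_mono_null (compl_subset_compl.mpr hKR) (hφ.mollify_compl_thickening_eq_zero hε' hKc))
    (hφ.mollify_le_smul_volume hε' ω) (hφ.restrict_mollify_le_smul_volume hε σ 0 (3 * R)) hB
    (fun Q hQ hside ⟨x, hxQ, hx⟩ => hφ.mollify_le_A2_mul hε σ ω hQ (by linarith)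
      (hQ₀R.trans (Cube.closedBall_subset_quadruple_of_mem hxQ hx hside.le)) hωQ₀.ne' hωQ₀')
    Q.toSet
  have ha : 32 ^ n * A2 σ ω / ω Q₀.toSet ≠ ⊤ := ENNReal.div_ne_top (by finiteness) hωQ₀.ne'
  finiteness

/-- **Mollified weights have finite full testing constant.** If `σ, ω` are locally finite
positive Borel measures on `ℝⁿ` with `ω` compactly supported and `A₂(σ,ω) < ∞`, then for
all `0 < ε, ε' < 1/4` the mollified pair `(σ_ε, ω_{ε'})` has finite full testing
constant. -/
theorem mollified_fullTesting_finite
    {n : ℕ} (φ : (Fin n → ℝ) → ℝ) (hφ : IsAdmissibleMollifier φ)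
    (σ ω : Measure (Fin n → ℝ))
    (hσ : IsLocallyFiniteMeasure σ) (hω : IsLocallyFiniteMeasure ω)
    (hωc : ∃ K : Set (Fin n → ℝ), IsCompact K ∧ ω Kᶜ = 0)
    (hA2 : A2 σ ω ≠ ⊤)
    (ε ε' : ℝ) (hε : 0 < ε) (hε' : 0 < ε') (hε4 : ε < 1/4) (hε'4 : ε' < 1/4) :
    fullTesting (mollify φ ε σ) (mollify φ ε' ω) < ⊤ :=
  mollified_fullTesting_finite_general φ hφ σ ω hσ hω hωc hA2 ε ε' hε hε'
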